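/- arXiv:1603.04982 — 2 statements merged into one kernel-verified Lean document; each statement's English description precedes it below -/
import Mathlib

section
/- (Theorem 1, case (a).) Assume f and g are continuously differentiable on [0,1], p_a ≥ 0, 0 < p_l < R_L − f(1), p_l ≥ p_a, the uniqueness condition holds (sup over (x,y) ∈ Ω of (g'(y)/g(y))·(R_L − f(1−x))/(R_L − f(1−x) − g(y)) < 1/κ with κ = sup over Ω of max{(p_l − p_a)/(R_L − f(1−x) − g(y)), p_a/g(y)}), and that θ_lb(x) ≤ θ_ab(y) for all (x,y) ∈ Ω. Then the unique market equilibrium is (x†, 0), where x† is the unique point of (0,1) satisfying x† = 1 − p_l/(R_L − f(1−x†)); in particular the advanced service has zero market share at equilibrium. -/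
open Set

/-- The feasible set of market shares: Ω = {(x,y) : x ≥ 0, y ≥ 0, x + y ≤ 1}. -/
def Omega : Set (ℝ × ℝ) := {p | 0 ≤ p.1 ∧ 0 ≤ p.2 ∧ p.1 + p.2 ≤ 1}

/-- θ_lb(x) = p_l / (R_L − f(1−x)). -/
noncomputable def thetaLB (RL : ℝ) (f : ℝ → ℝ) (pl : ℝ) (x : ℝ) : ℝ :=
  pl / (RL - f (1 - x))

/-- θ_ab(y) = p_a / g(y). -/
noncomputable def thetaAB (g : ℝ → ℝ) (pa : ℝ) (y : ℝ) : ℝ := pa / g y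

/-- θ_la(x,y) = (p_l − p_a) / (R_L − f(1−x) − g(y)). -/
noncomputable def thetaLA (RL : ℝ) (f g : ℝ → ℝ) (pl pa : ℝ) (p : ℝ × ℝ) : ℝ :=
  (pl - pa) / (RL - f (1 - p.1) - g p.2)

/-- The Stage-III update map h̃. -/
noncomputable def hmap (RL : ℝ) (f g : ℝ → ℝ) (pl pa : ℝ) (p : ℝ × ℝ) : ℝ × ℝ :=
  (max (1 - max (thetaLA RL f g pl pa p) (thetaLB RL f pl p.1)) 0,
   max (min (thetaLA RL f g pl pa p) 1 - thetaAB g pa p.2) 0)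

/-!
Cross-multiplying, θ_lb ≤ θ_ab is equivalent to θ_la ≤ θ_lb, so in case (a) we have
θ_la ≤ θ_lb ≤ θ_ab on Ω and no user strictly prefers the advanced service:
the second component of h̃ vanishes and the first reduces to x ↦ max (1 − θ_lb(x)) 0.
Since θ_lb is nondecreasing, x + θ_lb(x) is strictly increasing on [0,1], so the intermediate
value theorem gives exactly one root of x = 1 − θ_lb(x), and θ_lb(0) < 1 rules out the clipped
solution x = 0.
-/

lemma sub_div_sub_le_div_of_div_le_div {a b D G : ℝ} (hG : 0 < G) (hGD : G < D)
    (h : a / D ≤ b / G) : (a - b) / (D - G) ≤ a / D := by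
  have hD : 0 < D := hG.trans hGD
  rw [div_le_div_iff₀ hD hG] at h
  rw [div_le_div_iff₀ (sub_pos.2 hGD) hD]
  linarith

lemma exists_mem_Ioo_eq_one_sub {φ : ℝ → ℝ} (hφ : ContinuousOn φ (Icc 0 1))
    (h0 : φ 0 < 1) (h1 : 0 < φ 1) : ∃ x ∈ Ioo (0 : ℝ) 1, x = 1 - φ x := by
  have hcont : ContinuousOn (fun x => x + φ x) (Icc 0 1) := continuousOn_id.add hφ
  obtain ⟨x, hx, hx_eq⟩ := intermediate_value_Ioo zero_le_one hcont
    (show (1 : ℝ) ∈ Ioo (0 + φ 0) (1 + φ 1) from ⟨by linarith, by linarith⟩)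
  exact ⟨x, hx, by simp only at hx_eq; linarith⟩

lemma MonotoneOn.eq_of_eq_one_sub {φ : ℝ → ℝ} {s : Set ℝ} (hφ : MonotoneOn φ s) {x y : ℝ}
    (hx : x ∈ s) (hy : y ∈ s) (hx_eq : x = 1 - φ x) (hy_eq : y = 1 - φ y) : x = y :=
  (strictMonoOn_id.add_monotone hφ).injOn hx hy (by simp only [id]; linarith)

lemma eq_one_sub_of_eq_max_one_sub {φ : ℝ → ℝ} {x : ℝ} (h0 : φ 0 < 1)
    (hx : x = max (1 - φ x) 0) : x = 1 - φ x := by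
  rcases le_total (1 - φ x) 0 with h | h
  · rw [max_eq_right h] at hx
    subst hx
    linarith
  · rwa [max_eq_left h] at hx

lemma mem_Icc_fst_of_mem_Omega {p : ℝ × ℝ} (hp : p ∈ Omega) : p.1 ∈ Icc (0 : ℝ) 1 :=
  ⟨hp.1, by linarith [hp.2.1, hp.2.2]⟩

lemma mem_Icc_snd_of_mem_Omega {p : ℝ × ℝ} (hp : p ∈ Omega) : p.2 ∈ Icc (0 : ℝ) 1 :=
  ⟨hp.2.1, by linarith [hp.1, hp.2.2]⟩

lemma mk_zero_mem_Omega {x : ℝ} (hx : x ∈ Icc (0 : ℝ) 1) : (x, (0 : ℝ)) ∈ Omega :=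
  ⟨hx.1, le_rfl, by simpa using hx.2⟩

section Thresholds

variable {RL : ℝ} {f g : ℝ → ℝ} {pl pa : ℝ}

lemma thetaLB_pos (hpl : 0 < pl) {x : ℝ} (hx : f (1 - x) < RL) : 0 < thetaLB RL f pl x :=
  div_pos hpl (sub_pos.2 hx)

lemma thetaLB_zero_lt_one (hpl : 0 ≤ pl) (h : pl < RL - f 1) : thetaLB RL f pl 0 < 1 := by
  rw [thetaLB, sub_zero, div_lt_one (hpl.trans_lt h)]
  exact h

lemma continuousOn_thetaLB (hf : ContinuousOn f (Icc 0 1))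
    (hRL : ∀ x ∈ Icc (0 : ℝ) 1, f (1 - x) < RL) : ContinuousOn (thetaLB RL f pl) (Icc 0 1) := by
  have hmaps : MapsTo (fun x : ℝ => 1 - x) (Icc 0 1) (Icc 0 1) :=
    fun x hx => ⟨by linarith [hx.2], by linarith [hx.1]⟩
  exact continuousOn_const.div
    (continuousOn_const.sub (hf.comp (continuousOn_const.sub continuousOn_id) hmaps))
    fun x hx => (sub_pos.2 (hRL x hx)).ne'

lemma monotoneOn_thetaLB (hf : AntitoneOn f (Icc 0 1))
    (hRL : ∀ x ∈ Icc (0 : ℝ) 1, f (1 - x) < RL) (hpl : 0 ≤ pl) :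
    MonotoneOn (thetaLB RL f pl) (Icc 0 1) := by
  intro a ha b hb hab
  have hfab : f (1 - a) ≤ f (1 - b) :=
    hf ⟨by linarith [hb.2], by linarith [hb.1]⟩ ⟨by linarith [ha.2], by linarith [ha.1]⟩
      (by linarith)
  have hb_pos : 0 < RL - f (1 - b) := sub_pos.2 (hRL b hb)
  unfold thetaLB
  gcongr

lemma thetaLA_le_thetaLB {p : ℝ × ℝ} (hg : 0 < g p.2) (hRL : f (1 - p.1) + g p.2 < RL)
    (h : thetaLB RL f pl p.1 ≤ thetaAB g pa p.2) : thetaLA RL f g pl pa p ≤ thetaLB RL f pl p.1 :=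
  sub_div_sub_le_div_of_div_le_div hg (by linarith) h

lemma hmap_eq_of_thetaLA_le_thetaLB {p : ℝ × ℝ}
    (hla : thetaLA RL f g pl pa p ≤ thetaLB RL f pl p.1)
    (hab : thetaLB RL f pl p.1 ≤ thetaAB g pa p.2) :
    hmap RL f g pl pa p = (max (1 - thetaLB RL f pl p.1) 0, 0) := by
  have hmin := min_le_left (thetaLA RL f g pl pa p) 1
  have hsnd : min (thetaLA RL f g pl pa p) 1 - thetaAB g pa p.2 ≤ 0 := by linarith
  rw [hmap, max_eq_right hla, max_eq_right hsnd]

end Thresholds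

theorem stmt6_general
    (RL : ℝ) (f g : ℝ → ℝ)
    (hf_cont : ContinuousOn f (Set.Icc 0 1))
    (hf_anti : AntitoneOn f (Set.Icc 0 1))
    (hg_pos : ∀ t ∈ Set.Icc (0:ℝ) 1, 0 < g t)
    (hRL : ∀ p ∈ Omega, f (1 - p.1) + g p.2 < RL)
    (pl pa : ℝ)
    (hpl_pos : 0 < pl) (hpl_lt : pl < RL - f 1)
    -- case (a): θ_lb(x) ≤ θ_ab(y) for all (x,y) ∈ Ω
    (hcase : ∀ p ∈ Omega, thetaLB RL f pl p.1 ≤ thetaAB g pa p.2) :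
    ∃ xd, xd ∈ Set.Ioo (0:ℝ) 1 ∧ xd = 1 - pl / (RL - f (1 - xd)) ∧
      (∀ x' ∈ Set.Ioo (0:ℝ) 1, x' = 1 - pl / (RL - f (1 - x')) → x' = xd) ∧
      (xd, (0:ℝ)) ∈ Omega ∧ hmap RL f g pl pa (xd, 0) = (xd, 0) ∧
      (∀ q ∈ Omega, hmap RL f g pl pa q = q → q = (xd, 0)) := by
  have hf_lt : ∀ x ∈ Icc (0 : ℝ) 1, f (1 - x) < RL := fun x hx => by
    linarith [hRL _ (mk_zero_mem_Omega hx), hg_pos 0 ⟨le_rfl, zero_le_one⟩]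
  have hmap_eq : ∀ q ∈ Omega, hmap RL f g pl pa q = (max (1 - thetaLB RL f pl q.1) 0, 0) :=
    fun q hq => hmap_eq_of_thetaLA_le_thetaLB
      (thetaLA_le_thetaLB (hg_pos _ (mem_Icc_snd_of_mem_Omega hq)) (hRL q hq) (hcase q hq))
      (hcase q hq)
  have hθ0 := thetaLB_zero_lt_one hpl_pos.le hpl_lt
  obtain ⟨xd, hxd, hxd_eq⟩ := exists_mem_Ioo_eq_one_sub (continuousOn_thetaLB hf_cont hf_lt)
    hθ0 (thetaLB_pos hpl_pos (hf_lt 1 ⟨zero_le_one, le_rfl⟩))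
  have huniq : ∀ x ∈ Icc (0 : ℝ) 1, x = 1 - thetaLB RL f pl x → x = xd := fun x hx hx_eq =>
    (monotoneOn_thetaLB hf_anti hf_lt hpl_pos.le).eq_of_eq_one_sub hx
      (Ioo_subset_Icc_self hxd) hx_eq hxd_eq
  have hxd_mem := mk_zero_mem_Omega (Ioo_subset_Icc_self hxd)
  refine ⟨xd, hxd, hxd_eq, fun x hx => huniq x (Ioo_subset_Icc_self hx), hxd_mem, ?_, ?_⟩
  · rw [hmap_eq _ hxd_mem, ← hxd_eq, max_eq_left hxd.1.le]
  · intro q hq hfix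
    rw [hmap_eq q hq, Prod.ext_iff] at hfix
    exact Prod.ext (huniq _ (mem_Icc_fst_of_mem_Omega hq)
      (eq_one_sub_of_eq_max_one_sub hθ0 hfix.1.symm)) hfix.2.symm

/-- Theorem 1, case (a): if θ_lb ≤ θ_ab throughout Ω, the unique market
equilibrium is (x†, 0) with x† the unique point of (0,1) satisfying
x† = 1 − p_l/(R_L − f(1−x†)); the advanced service has zero market share. -/
theorem stmt6
    (RL : ℝ) (f g : ℝ → ℝ) (f' g' : ℝ → ℝ)
    (hf_cont : ContinuousOn f (Set.Icc 0 1))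
    (hf_nonneg : ∀ t ∈ Set.Icc (0:ℝ) 1, 0 ≤ f t)
    (hf_anti : AntitoneOn f (Set.Icc 0 1))
    (hg_cont : ContinuousOn g (Set.Icc 0 1))
    (hg_pos : ∀ t ∈ Set.Icc (0:ℝ) 1, 0 < g t)
    (hg_mono : MonotoneOn g (Set.Icc 0 1))
    (hRL : ∀ p ∈ Omega, f (1 - p.1) + g p.2 < RL)
    -- f and g are continuously differentiable on [0,1], with derivatives f' and g'
    (hf' : ∀ t ∈ Set.Icc (0:ℝ) 1, HasDerivWithinAt f (f' t) (Set.Icc 0 1) t)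
    (hf'_cont : ContinuousOn f' (Set.Icc 0 1))
    (hg' : ∀ t ∈ Set.Icc (0:ℝ) 1, HasDerivWithinAt g (g' t) (Set.Icc 0 1) t)
    (hg'_cont : ContinuousOn g' (Set.Icc 0 1))
    (pl pa : ℝ) (hpa : 0 ≤ pa) (hplpa : pa ≤ pl)
    (hpl_pos : 0 < pl) (hpl_lt : pl < RL - f 1)
    -- the uniqueness condition
    (hcond :
      sSup ((fun p : ℝ × ℝ =>
          (g' p.2 / g p.2) * ((RL - f (1 - p.1)) / (RL - f (1 - p.1) - g p.2))) '' Omega)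
        < 1 / sSup ((fun p : ℝ × ℝ =>
          max ((pl - pa) / (RL - f (1 - p.1) - g p.2)) (pa / g p.2)) '' Omega))
    -- case (a): θ_lb(x) ≤ θ_ab(y) for all (x,y) ∈ Ω
    (hcase : ∀ p ∈ Omega, thetaLB RL f pl p.1 ≤ thetaAB g pa p.2) :
    ∃ xd, xd ∈ Set.Ioo (0:ℝ) 1 ∧ xd = 1 - pl / (RL - f (1 - xd)) ∧
      (∀ x' ∈ Set.Ioo (0:ℝ) 1, x' = 1 - pl / (RL - f (1 - x')) → x' = xd) ∧
      (xd, (0:ℝ)) ∈ Omega ∧ hmap RL f g pl pa (xd, 0) = (xd, 0) ∧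
      (∀ q ∈ Omega, hmap RL f g pl pa q = q → q = (xd, 0)) :=
  stmt6_general RL f g hf_cont hf_anti hg_pos hRL pl pa hpl_pos hpl_lt hcase
end

section
/- (Theorem 3.) Assume f and g are twice continuously differentiable on [0,1], f nonnegative, nonincreasing and convex on [0,1], g strictly positive, nondecreasing and concave on [0,1], R_L > f(1−x) + g(y) for all (x,y) ∈ Ω, w ≥ 0, c_l > 0, c_a > 0, and suppose the dominant-diagonal condition holds on Ω: for every (x,y) ∈ Ω, −∂²U_sl^{II}/∂x²(x,y) > g(y) + y·g'(y) and −∂²U_db^{II}/∂y²(x,y) > g(y) + y·g'(y) (the right-hand sides being the cross partials ∂²U_sl^{II}/∂(−x)∂y = ∂²U_db^{II}/∂(−x)∂y = g(y) + y·g'(y)). Then there exists a unique market share equilibrium of the wholesale-pricing market share competition game, i.e., a unique pair (x*, y*) such that x* maximizes U_sl^{II}(·, y*) over [0,1] and y* maximizes U_db^{II}(x*, ·) over [0,1], and it satisfies x* < 1/2 and x* + y* < 1. -/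
/-!
Both marginal payoffs are explicit. The licensee's is negative for `x ≥ 1/2` and the database's for
`x + y ≥ 1`, which confines every equilibrium to `x < 1/2`, `x + y < 1`; both cross partials equal
`-(g y + y g' y) ≤ 0`. Hence each best response is antitone (single crossing), the composite best
response is monotone on `[0,1]`, and Knaster–Tarski gives an equilibrium. Uniqueness is Rosen's
argument: along the segment joining two equilibria, pair the vector of marginal payoffs with the
direction of the segment. The first-order conditions make this pairing `≤ 0` at one end and `≥ 0` at
the other, while the dominant-diagonal condition makes its derivative a negative definite quadratic
form.
-/

open Set

/-- Leasing price as a function of market shares: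
P_l(x,y) = (1−x)(R_L − f(1−x) − g(y)) + (1−x−y)·g(y). -/
noncomputable def Pl (RL : ℝ) (f g : ℝ → ℝ) (x y : ℝ) : ℝ :=
  (1 - x) * (RL - f (1 - x) - g y) + (1 - x - y) * g y

/-- Information price as a function of market shares: P_a(x,y) = (1−x−y)·g(y). -/
noncomputable def Pa (g : ℝ → ℝ) (x y : ℝ) : ℝ := (1 - x - y) * g y

/-- Licensee's market-share payoff under the revenue-sharing scheme:
U_sl(x,y) = (P_l(x,y) − c_l)·x·(1−δ). -/
noncomputable def Usl (RL : ℝ) (f g : ℝ → ℝ) (cl δ : ℝ) (x y : ℝ) : ℝ :=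
  (Pl RL f g x y - cl) * x * (1 - δ)

/-- Database's market-share payoff under the revenue-sharing scheme:
U_db(x,y) = (P_a(x,y) − c_a)·y + (P_l(x,y) − c_l)·x·δ. -/
noncomputable def Udb (RL : ℝ) (f g : ℝ → ℝ) (ca cl δ : ℝ) (x y : ℝ) : ℝ :=
  (Pa g x y - ca) * y + (Pl RL f g x y - cl) * x * δ

/-- Licensee's market-share payoff under the wholesale-pricing scheme:
U_sl^{II}(x,y) = (P_l(x,y) − w − c_l)·x. -/
noncomputable def UslII (RL : ℝ) (f g : ℝ → ℝ) (w cl : ℝ) (x y : ℝ) : ℝ :=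
  (Pl RL f g x y - w - cl) * x

/-- Database's market-share payoff under the wholesale-pricing scheme:
U_db^{II}(x,y) = P_a(x,y)·y + w·x − c_a·y. -/
noncomputable def UdbII (g : ℝ → ℝ) (w ca : ℝ) (x y : ℝ) : ℝ :=
  Pa g x y * y + w * x - ca * y

theorem IsMaxOn.hasDerivWithinAt_mul_sub_nonpos {F : ℝ → ℝ} {s : Set ℝ} {x z d : ℝ}
    (hmax : IsMaxOn F s x) (hs : Convex ℝ s) (hx : x ∈ s) (hz : z ∈ s)
    (hd : HasDerivWithinAt F d s x) : d * (z - x) ≤ 0 := by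
  simpa [mul_comm] using hmax.localize.hasFDerivWithinAt_nonpos hd.hasFDerivWithinAt
    (sub_mem_posTangentConeAt_of_segment_subset (hs.segment_subset hx hz))

theorem IsMaxOn.complementarySlackness {F : ℝ → ℝ} {a b c x d : ℝ}
    (hmax : IsMaxOn F (Icc a b) x) (hx : x ∈ Icc a b)
    (hd : HasDerivWithinAt F d (Icc a b) x)
    (hc : c ≤ b) (hneg : c ≤ x → d < 0) : d ≤ 0 ∧ (a < x → x < c ∧ d = 0) := by
  have hvi : ∀ z ∈ Icc a b, d * (z - x) ≤ 0 := fun z hz =>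
    hmax.hasDerivWithinAt_mul_sub_nonpos (convex_Icc a b) hx hz hd
  have hle : d ≤ 0 := by
    rcases hx.2.lt_or_eq with hxb | rfl
    · nlinarith [hvi b (right_mem_Icc.2 (hx.1.trans hx.2))]
    · exact (hneg hc).le
  refine ⟨hle, fun hax => ?_⟩
  have hge : 0 ≤ d := by nlinarith [hvi a (left_mem_Icc.2 (hx.1.trans hx.2))]
  exact ⟨lt_of_not_ge fun hcx => (hneg hcx).not_ge hge, le_antisymm hle hge⟩

theorem exists_isFixedPt_of_monotoneOn_Icc {α : Type*} [ConditionallyCompleteLattice α]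
    {a b : α} (hab : a ≤ b) {F : α → α} (hmaps : MapsTo F (Icc a b) (Icc a b))
    (hmono : MonotoneOn F (Icc a b)) : ∃ x ∈ Icc a b, F x = x := by
  have : Fact (a ≤ b) := ⟨hab⟩
  let G : Icc a b →o Icc a b := ⟨hmaps.restrict, fun x y hxy => hmono x.2 y.2 hxy⟩
  exact ⟨G.lfp, G.lfp.2, congrArg Subtype.val G.isFixedPt_lfp⟩

theorem antitoneOn_of_singleCrossing {M : ℝ → ℝ → ℝ} {B : ℝ → ℝ} {s : Set ℝ} {a b : ℝ}
    (hB : MapsTo B s (Icc a b)) (hfoc : ∀ y ∈ s, M (B y) y ≤ 0 ∧ (a < B y → M (B y) y = 0))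
    (hanti : ∀ x ∈ Icc a b, AntitoneOn (M x) s)
    (hcross : ∀ y ∈ s, ∀ x ∈ Icc a b, ∀ x' ∈ Icc a b, x < x' → M x y ≤ 0 → M x' y < 0) :
    AntitoneOn B s := by
  intro y hy y' hy' hyy'
  by_contra! hlt
  have hzero : M (B y') y' = 0 := (hfoc y' hy').2 ((hB hy).1.trans_lt hlt)
  have hle : M (B y') y' ≤ M (B y') y := hanti (B y') (hB hy') hy hy' hyy'
  have hneg : M (B y') y < 0 := hcross y hy _ (hB hy) _ (hB hy') hlt (hfoc y hy).1
  linarith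

theorem strictAntiOn_Icc_of_hasDerivWithinAt_neg {F F' : ℝ → ℝ} {a b : ℝ}
    (hF : ∀ x ∈ Icc a b, HasDerivWithinAt F (F' x) (Icc a b) x)
    (hneg : ∀ x ∈ Ioo a b, F' x < 0) : StrictAntiOn F (Icc a b) := by
  refine strictAntiOn_of_hasDerivWithinAt_neg (f' := F') (convex_Icc a b)
    (fun x hx => (hF x hx).continuousWithinAt) ?_ ?_ <;> rw [interior_Icc]
  · exact fun x hx => (hF x (Ioo_subset_Icc_self hx)).mono Ioo_subset_Icc_self
  · exact hneg

theorem HasDerivWithinAt.comp_affine {F : ℝ → ℝ} {s s' : Set ℝ} {a b t d : ℝ}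
    (hF : HasDerivWithinAt F d s' (a + t * b)) (hmaps : MapsTo (fun u => a + u * b) s s') :
    HasDerivWithinAt (fun u => F (a + u * b)) (d * b) s t := by
  have hlin : HasDerivWithinAt (fun u => a + u * b) b s t := by
    simpa using ((hasDerivWithinAt_id t s).mul_const b).const_add a
  exact hF.comp t hlin hmaps

theorem hasDerivWithinAt_sub_mul_of_continuousWithinAt {u : ℝ → ℝ} {s : Set ℝ} {t₀ : ℝ}
    (hu : ContinuousWithinAt u s t₀) :
    HasDerivWithinAt (fun t => (t - t₀) * u t) (u t₀) s t₀ := by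
  rw [hasDerivWithinAt_iff_tendsto_slope]
  refine (hu.tendsto.mono_left (nhdsWithin_mono t₀ sdiff_subset)).congr' ?_
  filter_upwards [self_mem_nhdsWithin] with t ht
  rw [slope_def_field, sub_self, zero_mul, sub_zero,
    mul_div_cancel_left₀ _ (sub_ne_zero.2 ht.2)]

theorem quadratic_neg_of_dominant_diagonal {A B k dx dy : ℝ} (hA : k < -A) (hB : k < -B)
    (hk : 0 ≤ k) (hne : dx ≠ 0 ∨ dy ≠ 0) : (A * dx - k * dy) * dx + (B * dy - k * dx) * dy < 0 := by
  rcases hne with h | h <;>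
    nlinarith [sq_pos_of_ne_zero h, mul_nonneg hk (sq_nonneg (dx + dy)),
      mul_nonneg (sub_nonneg.2 hA.le) (sq_nonneg dx),
      mul_nonneg (sub_nonneg.2 hB.le) (sq_nonneg dy)]

/-- An abstract form of the wholesale-pricing game: `p`, `q` are the marginal payoffs of the two
players and `pxx`, `qyy` their derivatives in the player's own strategy; `p_eq` and `q_eq` say that
both cross partials equal `-k`, with `k = h'`. -/
structure DominantDiagonalGame (u v p pxx q qyy : ℝ → ℝ → ℝ) (h k : ℝ → ℝ) : Prop where
  hasDerivWithinAt_u : ∀ y ∈ Icc (0:ℝ) 1, ∀ x ∈ Icc (0:ℝ) 1,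
    HasDerivWithinAt (fun t => u t y) (p x y) (Icc 0 1) x
  hasDerivWithinAt_p : ∀ y ∈ Icc (0:ℝ) 1, ∀ x ∈ Icc (0:ℝ) 1,
    HasDerivWithinAt (fun t => p t y) (pxx x y) (Icc 0 1) x
  hasDerivWithinAt_v : ∀ x ∈ Icc (0:ℝ) 1, ∀ y ∈ Icc (0:ℝ) 1,
    HasDerivWithinAt (fun t => v x t) (q x y) (Icc 0 1) y
  hasDerivWithinAt_q : ∀ x ∈ Icc (0:ℝ) 1, ∀ y ∈ Icc (0:ℝ) 1,
    HasDerivWithinAt (fun t => q x t) (qyy x y) (Icc 0 1) y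
  p_eq : ∀ x ∈ Icc (0:ℝ) 1, ∀ y ∈ Icc (0:ℝ) 1, p x y = p x 0 - h y
  q_eq : ∀ x ∈ Icc (0:ℝ) 1, ∀ y ∈ Icc (0:ℝ) 1, q x y = q 0 y - x * k y
  hasDerivWithinAt_h : ∀ y ∈ Icc (0:ℝ) 1, HasDerivWithinAt h (k y) (Icc 0 1) y
  continuousOn_k : ContinuousOn k (Icc 0 1)
  k_nonneg : ∀ y ∈ Icc (0:ℝ) 1, 0 ≤ k y
  p_neg : ∀ x ∈ Icc (0:ℝ) 1, ∀ y ∈ Icc (0:ℝ) 1, 1 / 2 ≤ x → p x y < 0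
  q_neg : ∀ x ∈ Icc (0:ℝ) 1, ∀ y ∈ Icc (0:ℝ) 1, 1 ≤ x + y → q x y < 0
  dominant : ∀ z ∈ Omega, -pxx z.1 z.2 > k z.2 ∧ -qyy z.1 z.2 > k z.2

namespace DominantDiagonalGame

variable {u v p pxx q qyy : ℝ → ℝ → ℝ} {h k : ℝ → ℝ}

theorem strictAntiOn_p_zero (G : DominantDiagonalGame u v p pxx q qyy h k) :
    StrictAntiOn (fun x => p x 0) (Icc 0 1) :=
  strictAntiOn_Icc_of_hasDerivWithinAt_neg (fun x hx => G.hasDerivWithinAt_p 0 (by simp) x hx)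
    fun x hx => by
      have := (G.dominant (x, 0) ⟨hx.1.le, le_rfl, by simpa using hx.2.le⟩).1
      linarith [G.k_nonneg 0 (by simp)]

theorem strictAntiOn_q (G : DominantDiagonalGame u v p pxx q qyy h k) {x : ℝ}
    (hx : x ∈ Icc (0:ℝ) 1) : StrictAntiOn (q x) (Icc 0 (1 - x)) := by
  have hsub : Icc 0 (1 - x) ⊆ Icc (0:ℝ) 1 := Icc_subset_Icc le_rfl (by linarith [hx.1])
  refine strictAntiOn_Icc_of_hasDerivWithinAt_neg
    (fun y hy => (G.hasDerivWithinAt_q x hx y (hsub hy)).mono hsub) fun y hy => ?_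
  have := (G.dominant (x, y) ⟨hx.1, hy.1.le, by linarith [hy.2]⟩).2
  linarith [G.k_nonneg y (hsub (Ioo_subset_Icc_self hy))]

theorem monotoneOn_h (G : DominantDiagonalGame u v p pxx q qyy h k) : MonotoneOn h (Icc 0 1) :=
  monotoneOn_of_hasDerivWithinAt_nonneg (convex_Icc 0 1)
    (fun y hy => (G.hasDerivWithinAt_h y hy).continuousWithinAt)
    (fun y hy => (G.hasDerivWithinAt_h y (interior_subset hy)).mono interior_subset)
    (fun y hy => G.k_nonneg y (interior_subset hy))

theorem p_nonpos_of_isMaxOn (G : DominantDiagonalGame u v p pxx q qyy h k) {x y : ℝ}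
    (hx : x ∈ Icc (0:ℝ) 1) (hy : y ∈ Icc (0:ℝ) 1) (hmax : IsMaxOn (u · y) (Icc 0 1) x) :
    p x y ≤ 0 ∧ (0 < x → x < 1 / 2 ∧ p x y = 0) :=
  hmax.complementarySlackness hx (G.hasDerivWithinAt_u y hy x hx) (by norm_num)
    (G.p_neg x hx y hy)

theorem q_nonpos_of_isMaxOn (G : DominantDiagonalGame u v p pxx q qyy h k) {x y : ℝ}
    (hx : x ∈ Icc (0:ℝ) 1) (hy : y ∈ Icc (0:ℝ) 1) (hmax : IsMaxOn (v x ·) (Icc 0 1) y) :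
    q x y ≤ 0 ∧ (0 < y → y < 1 - x ∧ q x y = 0) :=
  hmax.complementarySlackness hy (G.hasDerivWithinAt_v x hx y hy)
    (by linarith [hx.1]) fun hxy => G.q_neg x hx y hy (by linarith)

theorem lt_half_and_add_lt_one_of_isMaxOn (G : DominantDiagonalGame u v p pxx q qyy h k) {x y : ℝ}
    (hx : x ∈ Icc (0:ℝ) 1) (hy : y ∈ Icc (0:ℝ) 1) (hmaxx : IsMaxOn (u · y) (Icc 0 1) x)
    (hmaxy : IsMaxOn (v x ·) (Icc 0 1) y) : x < 1 / 2 ∧ x + y < 1 := by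
  have hx2 : x < 1 / 2 := by
    rcases hx.1.eq_or_lt with rfl | hpos
    · norm_num
    · exact ((G.p_nonpos_of_isMaxOn hx hy hmaxx).2 hpos).1
  refine ⟨hx2, ?_⟩
  rcases hy.1.eq_or_lt with rfl | hpos
  · linarith
  · linarith [((G.q_nonpos_of_isMaxOn hx hy hmaxy).2 hpos).1]

theorem exists_isMaxOn_u (G : DominantDiagonalGame u v p pxx q qyy h k) (y : ℝ) :
    ∃ x ∈ Icc (0:ℝ) 1, y ∈ Icc (0:ℝ) 1 → IsMaxOn (u · y) (Icc 0 1) x := by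
  by_cases hy : y ∈ Icc (0:ℝ) 1
  · obtain ⟨x, hx, hmax⟩ := isCompact_Icc.exists_isMaxOn (nonempty_Icc.2 zero_le_one)
      fun x hx => (G.hasDerivWithinAt_u y hy x hx).continuousWithinAt
    exact ⟨x, hx, fun _ => hmax⟩
  · exact ⟨0, by simp, fun hy' => absurd hy' hy⟩

theorem exists_isMaxOn_v (G : DominantDiagonalGame u v p pxx q qyy h k) (x : ℝ) :
    ∃ y ∈ Icc (0:ℝ) 1, x ∈ Icc (0:ℝ) 1 → IsMaxOn (v x ·) (Icc 0 1) y := by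
  by_cases hx : x ∈ Icc (0:ℝ) 1
  · obtain ⟨y, hy, hmax⟩ := isCompact_Icc.exists_isMaxOn (nonempty_Icc.2 zero_le_one)
      fun y hy => (G.hasDerivWithinAt_v x hx y hy).continuousWithinAt
    exact ⟨y, hy, fun _ => hmax⟩
  · exact ⟨0, by simp, fun hx' => absurd hx' hx⟩

theorem exists_equilibrium (G : DominantDiagonalGame u v p pxx q qyy h k) :
    ∃ x ∈ Icc (0:ℝ) 1, ∃ y ∈ Icc (0:ℝ) 1,
      IsMaxOn (u · y) (Icc 0 1) x ∧ IsMaxOn (v x ·) (Icc 0 1) y := by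
  choose Bx hBx hBx_max using G.exists_isMaxOn_u
  choose By hBy hBy_max using G.exists_isMaxOn_v
  have hBx_anti : AntitoneOn Bx (Icc 0 1) := by
    refine antitoneOn_of_singleCrossing (M := p) (fun y _ => hBx y)
      (fun y hy => (G.p_nonpos_of_isMaxOn (hBx y) hy (hBx_max y hy)).imp_right
        fun h' hpos => (h' hpos).2)
      (fun x hx y hy y' hy' hyy' => ?_) (fun y hy x hx x' hx' hxx' hle => ?_)
    · rw [G.p_eq x hx y hy, G.p_eq x hx y' hy']
      linarith [G.monotoneOn_h hy hy' hyy']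
    · rw [G.p_eq x' hx' y hy]
      rw [G.p_eq x hx y hy] at hle
      linarith [G.strictAntiOn_p_zero hx hx' hxx']
  have hBy_anti : AntitoneOn By (Icc 0 1) := by
    refine antitoneOn_of_singleCrossing (M := fun y x => q x y) (fun x _ => hBy x)
      (fun x hx => (G.q_nonpos_of_isMaxOn hx (hBy x) (hBy_max x hx)).imp_right
        fun h' hpos => (h' hpos).2)
      (fun y hy x hx x' hx' hxx' => ?_) (fun x hx y hy y' hy' hyy' hle => ?_)
    · simp only
      rw [G.q_eq x hx y hy, G.q_eq x' hx' y hy]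
      nlinarith [G.k_nonneg y hy]
    · by_contra! hge
      have hy'x : y' < 1 - x := by
        by_contra! h'
        exact (G.q_neg x hx y' hy' (by linarith)).not_ge hge
      exact (G.strictAntiOn_q hx ⟨hy.1, by linarith⟩ ⟨hy'.1, hy'x.le⟩ hyy').not_ge
        (hle.trans hge)
  obtain ⟨x, hx, hfix⟩ := exists_isFixedPt_of_monotoneOn_Icc zero_le_one
    (fun x _ => hBx (By x)) fun x hx x' hx' hxx' =>
      hBx_anti (hBy x') (hBy x) (hBy_anti hx hx' hxx')
  refine ⟨x, hx, By x, hBy x, ?_, hBy_max x hx⟩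
  simpa only [hfix] using hBx_max (By x) (hBy x)

theorem hasDerivWithinAt_p_along (G : DominantDiagonalGame u v p pxx q qyy h k)
    {a b dx dy t₀ : ℝ}
    (hx : MapsTo (fun t => a + t * dx) (Icc 0 1) (Icc 0 1))
    (hy : MapsTo (fun t => b + t * dy) (Icc 0 1) (Icc 0 1)) (ht₀ : t₀ ∈ Icc (0:ℝ) 1) :
    HasDerivWithinAt (fun t => p (a + t * dx) (b + t * dy))
      (pxx (a + t₀ * dx) (b + t₀ * dy) * dx - k (b + t₀ * dy) * dy) (Icc 0 1) t₀ := by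
  have hpx := (G.hasDerivWithinAt_p _ (hy ht₀) _ (hx ht₀)).comp_affine hx
  have hh := (G.hasDerivWithinAt_h _ (hy ht₀)).comp_affine hy
  refine ((hpx.sub hh).add_const (h (b + t₀ * dy))).congr_of_mem (fun t ht => ?_) ht₀
  dsimp only [Pi.sub_apply]
  rw [G.p_eq _ (hx ht) (b + t * dy) (hy ht), G.p_eq _ (hx ht) (b + t₀ * dy) (hy ht₀)]
  ring

theorem hasDerivWithinAt_q_along (G : DominantDiagonalGame u v p pxx q qyy h k)
    {a b dx dy t₀ : ℝ}
    (hx : MapsTo (fun t => a + t * dx) (Icc 0 1) (Icc 0 1))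
    (hy : MapsTo (fun t => b + t * dy) (Icc 0 1) (Icc 0 1)) (ht₀ : t₀ ∈ Icc (0:ℝ) 1) :
    HasDerivWithinAt (fun t => q (a + t * dx) (b + t * dy))
      (qyy (a + t₀ * dx) (b + t₀ * dy) * dy - k (b + t₀ * dy) * dx) (Icc 0 1) t₀ := by
  have hqy := (G.hasDerivWithinAt_q _ (hx ht₀) _ (hy ht₀)).comp_affine hy
  have hk : ContinuousWithinAt (fun t => dx * k (b + t * dy)) (Icc 0 1) t₀ :=
    (G.continuousOn_k.comp (by fun_prop) hy t₀ ht₀).const_mul dx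
  -- `k` need not be differentiable: the cross term `(t - t₀) * (dx * k _)` still is at `t₀`
  refine (hqy.sub (hasDerivWithinAt_sub_mul_of_continuousWithinAt hk)).congr_of_mem
    (fun t ht => ?_) ht₀ |>.congr_deriv (by ring)
  dsimp only [Pi.sub_apply]
  rw [G.q_eq (a + t * dx) (hx ht) _ (hy ht), G.q_eq (a + t₀ * dx) (hx ht₀) _ (hy ht)]
  ring

theorem segment_mem_Omega {a b a' b' t : ℝ} (he : (a, b) ∈ Omega) (he' : (a', b') ∈ Omega)
    (ht : t ∈ Icc (0:ℝ) 1) : (a + t * (a' - a), b + t * (b' - b)) ∈ Omega := by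
  obtain ⟨ha, hb, hab⟩ := he
  obtain ⟨ha', hb', hab'⟩ := he'
  have h1 : 0 ≤ 1 - t := by linarith [ht.2]
  refine ⟨?_, ?_, ?_⟩ <;> dsimp only <;>
    nlinarith [mul_nonneg h1 ha, mul_nonneg ht.1 ha', mul_nonneg h1 hb, mul_nonneg ht.1 hb',
      mul_le_mul_of_nonneg_left hab h1, mul_le_mul_of_nonneg_left hab' ht.1]

theorem mem_Icc_of_mem_Omega {z : ℝ × ℝ} (hz : z ∈ Omega) :
    z.1 ∈ Icc (0:ℝ) 1 ∧ z.2 ∈ Icc (0:ℝ) 1 :=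
  ⟨⟨hz.1, by linarith [hz.2.1, hz.2.2]⟩, ⟨hz.2.1, by linarith [hz.1, hz.2.2]⟩⟩

theorem strictAntiOn_pairing (G : DominantDiagonalGame u v p pxx q qyy h k) {a b a' b' : ℝ}
    (he : (a, b) ∈ Omega) (he' : (a', b') ∈ Omega) (hne : a' - a ≠ 0 ∨ b' - b ≠ 0) :
    StrictAntiOn (fun t => p (a + t * (a' - a)) (b + t * (b' - b)) * (a' - a) +
      q (a + t * (a' - a)) (b + t * (b' - b)) * (b' - b)) (Icc 0 1) := by
  have hseg := fun t (ht : t ∈ Icc (0:ℝ) 1) => segment_mem_Omega he he' ht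
  have hx : MapsTo (fun t => a + t * (a' - a)) (Icc 0 1) (Icc 0 1) := fun t ht =>
    (mem_Icc_of_mem_Omega (hseg t ht)).1
  have hy : MapsTo (fun t => b + t * (b' - b)) (Icc 0 1) (Icc 0 1) := fun t ht =>
    (mem_Icc_of_mem_Omega (hseg t ht)).2
  refine strictAntiOn_Icc_of_hasDerivWithinAt_neg (fun t ht =>
    ((G.hasDerivWithinAt_p_along hx hy ht).mul_const _).add
      ((G.hasDerivWithinAt_q_along hx hy ht).mul_const _)) fun t ht => ?_
  obtain ⟨hp, hq⟩ := G.dominant _ (hseg t (Ioo_subset_Icc_self ht))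
  exact quadratic_neg_of_dominant_diagonal hp hq (G.k_nonneg _ (hy (Ioo_subset_Icc_self ht))) hne

theorem eq_of_isMaxOn (G : DominantDiagonalGame u v p pxx q qyy h k) {a b a' b' : ℝ}
    (ha : a ∈ Icc (0:ℝ) 1) (hb : b ∈ Icc (0:ℝ) 1) (ha' : a' ∈ Icc (0:ℝ) 1)
    (hb' : b' ∈ Icc (0:ℝ) 1) (hmaxa : IsMaxOn (u · b) (Icc 0 1) a)
    (hmaxb : IsMaxOn (v a ·) (Icc 0 1) b) (hmaxa' : IsMaxOn (u · b') (Icc 0 1) a')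
    (hmaxb' : IsMaxOn (v a' ·) (Icc 0 1) b') : a' = a ∧ b' = b := by
  have he : (a, b) ∈ Omega :=
    ⟨ha.1, hb.1, (G.lt_half_and_add_lt_one_of_isMaxOn ha hb hmaxa hmaxb).2.le⟩
  have he' : (a', b') ∈ Omega :=
    ⟨ha'.1, hb'.1, (G.lt_half_and_add_lt_one_of_isMaxOn ha' hb' hmaxa' hmaxb').2.le⟩
  by_contra hne
  have hne' : a' - a ≠ 0 ∨ b' - b ≠ 0 := by
    by_contra! h0
    exact hne ⟨sub_eq_zero.1 h0.1, sub_eq_zero.1 h0.2⟩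
  have h01 := G.strictAntiOn_pairing he he' hne' (left_mem_Icc.2 zero_le_one)
    (right_mem_Icc.2 zero_le_one) zero_lt_one
  have hI : Convex ℝ (Icc (0:ℝ) 1) := convex_Icc 0 1
  have := hmaxa.hasDerivWithinAt_mul_sub_nonpos hI ha ha' (G.hasDerivWithinAt_u b hb a ha)
  have := hmaxb.hasDerivWithinAt_mul_sub_nonpos hI hb hb' (G.hasDerivWithinAt_v a ha b hb)
  have := hmaxa'.hasDerivWithinAt_mul_sub_nonpos hI ha' ha (G.hasDerivWithinAt_u b' hb' a' ha')
  have := hmaxb'.hasDerivWithinAt_mul_sub_nonpos hI hb' hb (G.hasDerivWithinAt_v a' ha' b' hb')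
  simp only [zero_mul, add_zero, one_mul, add_sub_cancel] at h01
  linarith

theorem existsUnique_equilibrium (G : DominantDiagonalGame u v p pxx q qyy h k) :
    ∃ xs ys : ℝ, xs ∈ Icc (0:ℝ) 1 ∧ ys ∈ Icc (0:ℝ) 1 ∧
      (∀ x ∈ Icc (0:ℝ) 1, u x ys ≤ u xs ys) ∧ (∀ y ∈ Icc (0:ℝ) 1, v xs y ≤ v xs ys) ∧
      (∀ xs' ys' : ℝ, xs' ∈ Icc (0:ℝ) 1 → ys' ∈ Icc (0:ℝ) 1 →
        (∀ x ∈ Icc (0:ℝ) 1, u x ys' ≤ u xs' ys') → (∀ y ∈ Icc (0:ℝ) 1, v xs' y ≤ v xs' ys') →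
        xs' = xs ∧ ys' = ys) ∧
      xs < 1 / 2 ∧ xs + ys < 1 := by
  obtain ⟨xs, hxs, ys, hys, hmaxx, hmaxy⟩ := G.exists_equilibrium
  exact ⟨xs, ys, hxs, hys, hmaxx, hmaxy,
    fun _ _ hxs' hys' hmaxx' hmaxy' =>
      G.eq_of_isMaxOn hxs hys hxs' hys' hmaxx hmaxy hmaxx' hmaxy',
    G.lt_half_and_add_lt_one_of_isMaxOn hxs hys hmaxx hmaxy⟩

end DominantDiagonalGame

noncomputable def marginalUslII (RL : ℝ) (f f' g : ℝ → ℝ) (w cl x y : ℝ) : ℝ :=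
  (1 - 2 * x) * (RL - f (1 - x)) + x * (1 - x) * f' (1 - x) - y * g y - (w + cl)

noncomputable def marginalUdbII (g g' : ℝ → ℝ) (ca x y : ℝ) : ℝ :=
  -(y * g y) + (1 - x - y) * (g y + y * g' y) - ca

theorem hasDerivWithinAt_UslII {RL w cl x y : ℝ} {f f' g : ℝ → ℝ}
    (hf : HasDerivWithinAt f (f' (1 - x)) (Icc 0 1) (1 - x)) :
    HasDerivWithinAt (fun t => UslII RL f g w cl t y) (marginalUslII RL f f' g w cl x y)
      (Icc 0 1) x := by
  have hid := (hasDerivAt_id' (x := x)).hasDerivWithinAt (s := Icc 0 1)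
  have hf1 : HasDerivWithinAt (fun t => f (1 - t)) (-f' (1 - x)) (Icc 0 1) x := by
    simpa [Function.comp_def] using hf.comp x (hid.const_sub 1)
      fun t ht => ⟨by linarith [ht.2], by linarith [ht.1]⟩
  have hU : (fun t => UslII RL f g w cl t y) =
      fun t => t * (1 - t) * (RL - f (1 - t)) - t * (y * g y + (w + cl)) := by
    funext t
    simp only [UslII, Pl]
    ring
  rw [hU]
  refine (((hid.fun_mul (hid.const_sub 1)).fun_mul (hf1.const_sub RL)).fun_sub
    (hid.mul_const (y * g y + (w + cl)))).congr_deriv ?_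
  simp only [marginalUslII]
  ring

theorem hasDerivWithinAt_UdbII {w ca x y : ℝ} {g g' : ℝ → ℝ} {s : Set ℝ}
    (hg : HasDerivWithinAt g (g' y) s y) :
    HasDerivWithinAt (fun t => UdbII g w ca x t) (marginalUdbII g g' ca x y) s y := by
  have hid := (hasDerivAt_id' (x := y)).hasDerivWithinAt (s := s)
  have hU : (fun t => UdbII g w ca x t) = fun t => (1 - x - t) * (t * g t) + w * x - ca * t := by
    funext t
    simp only [UdbII, Pa]
    ring
  rw [hU]
  refine ((((hid.const_sub (1 - x)).fun_mul (hid.fun_mul hg)).add_const (w * x)).fun_sub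
    (hid.const_mul ca)).congr_deriv ?_
  simp only [marginalUdbII]
  ring

theorem marginalUslII_eq_sub (RL : ℝ) (f f' g : ℝ → ℝ) (w cl x y : ℝ) :
    marginalUslII RL f f' g w cl x y = marginalUslII RL f f' g w cl x 0 - y * g y := by
  simp only [marginalUslII]
  ring

theorem marginalUdbII_eq_sub (g g' : ℝ → ℝ) (ca x y : ℝ) :
    marginalUdbII g g' ca x y = marginalUdbII g g' ca 0 y - x * (g y + y * g' y) := by
  simp only [marginalUdbII]
  ring

theorem marginalUslII_neg {RL w cl x y : ℝ} {f f' g : ℝ → ℝ} (hx : x ∈ Icc (0:ℝ) 1)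
    (hy : y ∈ Icc (0:ℝ) 1) (hRL : 0 < RL - f (1 - x)) (hf' : f' (1 - x) ≤ 0) (hg : 0 ≤ g y)
    (hwcl : 0 < w + cl) (hx2 : 1 / 2 ≤ x) : marginalUslII RL f f' g w cl x y < 0 := by
  have h1 : (1 - 2 * x) * (RL - f (1 - x)) ≤ 0 :=
    mul_nonpos_of_nonpos_of_nonneg (by linarith) hRL.le
  have h2 : x * (1 - x) * f' (1 - x) ≤ 0 :=
    mul_nonpos_of_nonneg_of_nonpos (mul_nonneg hx.1 (by linarith [hx.2])) hf'
  have h3 : 0 ≤ y * g y := mul_nonneg hy.1 hg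
  simp only [marginalUslII]
  linarith

theorem marginalUdbII_neg {ca x y : ℝ} {g g' : ℝ → ℝ} (hy : 0 ≤ y) (hg : 0 ≤ g y)
    (hk : 0 ≤ g y + y * g' y) (hca : 0 < ca) (hxy : 1 ≤ x + y) :
    marginalUdbII g g' ca x y < 0 := by
  have h1 : (1 - x - y) * (g y + y * g' y) ≤ 0 := mul_nonpos_of_nonpos_of_nonneg (by linarith) hk
  have h2 : 0 ≤ y * g y := mul_nonneg hy hg
  simp only [marginalUdbII]
  linarith

theorem stmt16_general
    (RL : ℝ) (f g g' : ℝ → ℝ)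
    (hf_C2 : ContDiffOn ℝ 2 f (Set.Icc 0 1))
    (hf_anti : AntitoneOn f (Set.Icc 0 1))
    (hg_C2 : ContDiffOn ℝ 2 g (Set.Icc 0 1))
    (hg_pos : ∀ t ∈ Set.Icc (0:ℝ) 1, 0 < g t)
    (hg_mono : MonotoneOn g (Set.Icc 0 1))
    (hRL : ∀ p ∈ Omega, f (1 - p.1) + g p.2 < RL)
    (w cl ca : ℝ) (hw : 0 ≤ w) (hcl : 0 < cl) (hca : 0 < ca)
    (hg' : ∀ t ∈ Set.Icc (0:ℝ) 1, HasDerivWithinAt g (g' t) (Set.Icc 0 1) t)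
    -- first and second partial derivatives of the payoffs in own strategies
    (Uslx Uslxx Udby Udbyy : ℝ → ℝ → ℝ)
    (hUslx : ∀ y ∈ Set.Icc (0:ℝ) 1, ∀ x ∈ Set.Icc (0:ℝ) 1,
      HasDerivWithinAt (fun t => UslII RL f g w cl t y) (Uslx x y) (Set.Icc 0 1) x)
    (hUslxx : ∀ y ∈ Set.Icc (0:ℝ) 1, ∀ x ∈ Set.Icc (0:ℝ) 1,
      HasDerivWithinAt (fun t => Uslx t y) (Uslxx x y) (Set.Icc 0 1) x)
    (hUdby : ∀ x ∈ Set.Icc (0:ℝ) 1, ∀ y ∈ Set.Icc (0:ℝ) 1,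
      HasDerivWithinAt (fun t => UdbII g w ca x t) (Udby x y) (Set.Icc 0 1) y)
    (hUdbyy : ∀ x ∈ Set.Icc (0:ℝ) 1, ∀ y ∈ Set.Icc (0:ℝ) 1,
      HasDerivWithinAt (fun t => Udby x t) (Udbyy x y) (Set.Icc 0 1) y)
    -- the dominant-diagonal condition on Ω
    (hdom : ∀ p ∈ Omega,
      -Uslxx p.1 p.2 > g p.2 + p.2 * g' p.2 ∧
      -Udbyy p.1 p.2 > g p.2 + p.2 * g' p.2) :
    ∃ xs ys : ℝ, xs ∈ Set.Icc (0:ℝ) 1 ∧ ys ∈ Set.Icc (0:ℝ) 1 ∧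
      (∀ x ∈ Set.Icc (0:ℝ) 1, UslII RL f g w cl x ys ≤ UslII RL f g w cl xs ys) ∧
      (∀ y ∈ Set.Icc (0:ℝ) 1, UdbII g w ca xs y ≤ UdbII g w ca xs ys) ∧
      (∀ xs' ys' : ℝ, xs' ∈ Set.Icc (0:ℝ) 1 → ys' ∈ Set.Icc (0:ℝ) 1 →
        (∀ x ∈ Set.Icc (0:ℝ) 1, UslII RL f g w cl x ys' ≤ UslII RL f g w cl xs' ys') →
        (∀ y ∈ Set.Icc (0:ℝ) 1, UdbII g w ca xs' y ≤ UdbII g w ca xs' ys') →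
        xs' = xs ∧ ys' = ys) ∧
      xs < 1 / 2 ∧ xs + ys < 1 := by
  have hI : UniqueDiffOn ℝ (Icc (0:ℝ) 1) := uniqueDiffOn_Icc one_pos
  have hf' : ∀ t ∈ Icc (0:ℝ) 1, HasDerivWithinAt f (derivWithin f (Icc 0 1) t) (Icc 0 1) t :=
    fun t ht => (hf_C2.differentiableOn (by norm_num) t ht).hasDerivWithinAt
  have hg'_eq : EqOn (derivWithin g (Icc 0 1)) g' (Icc 0 1) := fun t ht =>
    (hg' t ht).derivWithin (hI t ht)
  have hk : ∀ t ∈ Icc (0:ℝ) 1, 0 ≤ g t + t * g' t := fun t ht =>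
    add_nonneg (hg_pos t ht).le (mul_nonneg ht.1 (hg'_eq ht ▸ hg_mono.derivWithin_nonneg))
  have hUslx_eq : ∀ y ∈ Icc (0:ℝ) 1, ∀ x ∈ Icc (0:ℝ) 1,
      Uslx x y = marginalUslII RL f (derivWithin f (Icc 0 1)) g w cl x y := fun y hy x hx =>
    (hI x hx).eq_deriv _ (hUslx y hy x hx)
      (hasDerivWithinAt_UslII (hf' _ ⟨by linarith [hx.2], by linarith [hx.1]⟩))
  have hUdby_eq : ∀ x ∈ Icc (0:ℝ) 1, ∀ y ∈ Icc (0:ℝ) 1, Udby x y = marginalUdbII g g' ca x y :=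
    fun x hx y hy => (hI y hy).eq_deriv _ (hUdby x hx y hy) (hasDerivWithinAt_UdbII (hg' y hy))
  have h0 : (0:ℝ) ∈ Icc (0:ℝ) 1 := left_mem_Icc.2 zero_le_one
  refine DominantDiagonalGame.existsUnique_equilibrium (h := fun y => y * g y)
    (k := fun y => g y + y * g' y) ⟨hUslx, hUslxx, hUdby, hUdbyy, fun x hx y hy => ?_,
      fun x hx y hy => ?_, fun y hy => ?_, ?_, hk, fun x hx y hy hx2 => ?_,
      fun x hx y hy hxy => ?_, hdom⟩
  · rw [hUslx_eq y hy x hx, hUslx_eq 0 h0 x hx]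
    exact marginalUslII_eq_sub ..
  · rw [hUdby_eq x hx y hy, hUdby_eq 0 h0 y hy]
    exact marginalUdbII_eq_sub ..
  · simpa using ((hasDerivAt_id' (x := y)).hasDerivWithinAt.fun_mul (hg' y hy))
  · exact hg_C2.continuousOn.add (continuousOn_id.mul
      ((hg_C2.continuousOn_derivWithin hI (by norm_num)).congr hg'_eq.symm))
  · have hRLx := hRL (x, 0) ⟨hx.1, le_rfl, by simpa using hx.2⟩
    rw [hUslx_eq y hy x hx]
    exact marginalUslII_neg hx hy (by linarith [hg_pos 0 h0]) hf_anti.derivWithin_nonpos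
      (hg_pos y hy).le (by linarith) hx2
  · rw [hUdby_eq x hx y hy]
    exact marginalUdbII_neg hy.1 (hg_pos y hy).le (hk y hy) hca hxy

/-- Theorem 3: under the shape assumptions and the dominant-diagonal
condition, the wholesale-pricing market share competition game has a unique market share
equilibrium, which satisfies x* < 1/2 and x* + y* < 1. -/
theorem stmt16
    (RL : ℝ) (f g g' : ℝ → ℝ)
    (hf_C2 : ContDiffOn ℝ 2 f (Set.Icc 0 1))
    (hf_nonneg : ∀ t ∈ Set.Icc (0:ℝ) 1, 0 ≤ f t)
    (hf_anti : AntitoneOn f (Set.Icc 0 1))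
    (hf_convex : ConvexOn ℝ (Set.Icc 0 1) f)
    (hg_C2 : ContDiffOn ℝ 2 g (Set.Icc 0 1))
    (hg_pos : ∀ t ∈ Set.Icc (0:ℝ) 1, 0 < g t)
    (hg_mono : MonotoneOn g (Set.Icc 0 1))
    (hg_concave : ConcaveOn ℝ (Set.Icc 0 1) g)
    (hRL : ∀ p ∈ Omega, f (1 - p.1) + g p.2 < RL)
    (w cl ca : ℝ) (hw : 0 ≤ w) (hcl : 0 < cl) (hca : 0 < ca)
    (hg' : ∀ t ∈ Set.Icc (0:ℝ) 1, HasDerivWithinAt g (g' t) (Set.Icc 0 1) t)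
    -- first and second partial derivatives of the payoffs in own strategies
    (Uslx Uslxx Udby Udbyy : ℝ → ℝ → ℝ)
    (hUslx : ∀ y ∈ Set.Icc (0:ℝ) 1, ∀ x ∈ Set.Icc (0:ℝ) 1,
      HasDerivWithinAt (fun t => UslII RL f g w cl t y) (Uslx x y) (Set.Icc 0 1) x)
    (hUslxx : ∀ y ∈ Set.Icc (0:ℝ) 1, ∀ x ∈ Set.Icc (0:ℝ) 1,
      HasDerivWithinAt (fun t => Uslx t y) (Uslxx x y) (Set.Icc 0 1) x)
    (hUdby : ∀ x ∈ Set.Icc (0:ℝ) 1, ∀ y ∈ Set.Icc (0:ℝ) 1,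
      HasDerivWithinAt (fun t => UdbII g w ca x t) (Udby x y) (Set.Icc 0 1) y)
    (hUdbyy : ∀ x ∈ Set.Icc (0:ℝ) 1, ∀ y ∈ Set.Icc (0:ℝ) 1,
      HasDerivWithinAt (fun t => Udby x t) (Udbyy x y) (Set.Icc 0 1) y)
    -- the dominant-diagonal condition on Ω
    (hdom : ∀ p ∈ Omega,
      -Uslxx p.1 p.2 > g p.2 + p.2 * g' p.2 ∧
      -Udbyy p.1 p.2 > g p.2 + p.2 * g' p.2) :
    ∃ xs ys : ℝ, xs ∈ Set.Icc (0:ℝ) 1 ∧ ys ∈ Set.Icc (0:ℝ) 1 ∧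
      (∀ x ∈ Set.Icc (0:ℝ) 1, UslII RL f g w cl x ys ≤ UslII RL f g w cl xs ys) ∧
      (∀ y ∈ Set.Icc (0:ℝ) 1, UdbII g w ca xs y ≤ UdbII g w ca xs ys) ∧
      (∀ xs' ys' : ℝ, xs' ∈ Set.Icc (0:ℝ) 1 → ys' ∈ Set.Icc (0:ℝ) 1 →
        (∀ x ∈ Set.Icc (0:ℝ) 1, UslII RL f g w cl x ys' ≤ UslII RL f g w cl xs' ys') →
        (∀ y ∈ Set.Icc (0:ℝ) 1, UdbII g w ca xs' y ≤ UdbII g w ca xs' ys') →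
        xs' = xs ∧ ys' = ys) ∧
      xs < 1 / 2 ∧ xs + ys < 1 :=
  stmt16_general RL f g g' hf_C2 hf_anti hg_C2 hg_pos hg_mono hRL w cl ca hw hcl hca hg' Uslx Uslxx
    Udby Udbyy hUslx hUslxx hUdby hUdbyy hdom
end
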